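/- Let S be a commutative ring that is a ℚ-algebra and f, g ∈ S[X]. Then for every x ∈ S, Sum(g)(Sum(f)(x)) = Sum(h)(x), where h ∈ S[X] is the polynomial h := Sum(g)∘Sum(f) − Sum(g)∘(Sum(f)∘(X − 1)) (compositions of polynomials). In other words, the dependent sum Σ^{Σ^x f} g equals Σ^x of the fiberwise sums of g over f. -/

import Mathlib

/-!
Over a `ℚ`-algebra, `Sum(p)` is the unique polynomial `Q` with `Q(0) = 0` and
`Q - Q∘(X - 1) = p`. Existence: the Faulhaber polynomials satisfy `F_d - F_d∘(X - 1) = X^d`,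
which over `ℚ` is checked at the natural numbers and then transported to `S`. Uniqueness: a
polynomial of degree `n ≥ 1` has `n`-th forward difference `n! • leadingCoeff ≠ 0`, so one
invariant under `X ↦ X + 1` is constant. The composite `Sum(g)∘Sum(f)` vanishes at `0` and its
difference is `h` by construction, hence it equals `Sum(h)`.
-/

open Polynomial

/-- The `d`-th Faulhaber polynomial over a commutative `ℚ`-algebra `S`:
`F_d := (1/(d+1)) ∑_{n=0}^{d} C(d+1,n) · B'_n · X^{d-n+1}`, where `B'_n` is the Bernoulli
number with the convention `B'_1 = +1/2`. -/
noncomputable def faulhaber (S : Type*) [CommRing S] [Algebra ℚ S] (d : ℕ) : Polynomial S :=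
  Polynomial.C (algebraMap ℚ S (1 / (d + 1))) *
    ∑ n ∈ Finset.range (d + 1),
      Polynomial.C (algebraMap ℚ S (((d + 1).choose n : ℚ) * bernoulli' n)) *
        Polynomial.X ^ (d - n + 1)

/-- For `p = ∑_{i} p_i X^i`, the polynomial `Sum(p) := ∑_{i} p_i · F_i`. -/
noncomputable def polySum {S : Type*} [CommRing S] [Algebra ℚ S] (p : Polynomial S) :
    Polynomial S :=
  ∑ i ∈ Finset.range (p.natDegree + 1), Polynomial.C (p.coeff i) * faulhaber S i

open Nat fwdDiff in
theorem Polynomial.eq_C_eval_zero_of_eval_add_one {R : Type*} [CommRing R] [IsAddTorsionFree R]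
    {q : R[X]} (hq : ∀ x, q.eval (x + 1) = q.eval x) : q = C (q.eval 0) := by
  rcases Nat.eq_zero_or_eq_succ_pred q.natDegree with hd | hd
  · nth_rw 1 [q.eq_C_of_natDegree_eq_zero hd, coeff_zero_eq_eval_zero]
  have hΔ : Δ_[1] q.eval = 0 := _root_.funext fun x => sub_eq_zero.mpr (hq x)
  have hΔn : (Δ_[1])^[q.natDegree] q.eval = 0 := by
    rw [hd, Function.iterate_succ_apply, hΔ]
    exact Function.iterate_fixed (fwdDiff_const 1 (0 : R)) _
  have hlead : q.natDegree ! • q.leadingCoeff = 0 := by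
    simpa [hΔn, nsmul_eq_mul, mul_comm] using (congrFun q.fwdDiff_iter_degree_eq_factorial 0).symm
  have hq0 : q = 0 :=
    leadingCoeff_eq_zero.mp ((nsmul_eq_zero_iff_right (factorial_ne_zero _)).mp hlead)
  simp [hq0] at hd

theorem Polynomial.eq_of_sub_comp_X_sub_one_eq {R : Type*} [CommRing R] [IsAddTorsionFree R]
    {A B : R[X]} (h : A - A.comp (X - C 1) = B - B.comp (X - C 1)) (h0 : A.eval 0 = B.eval 0) :
    A = B := by
  have hshift (x : R) : (A - B).eval (x + 1) = (A - B).eval x := by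
    have := congrArg (eval (x + 1)) h
    simp only [eval_sub, eval_comp, eval_X, eval_C, add_sub_cancel_right] at this ⊢
    linear_combination this
  rw [← sub_eq_zero, eq_C_eval_zero_of_eval_add_one hshift, eval_sub, h0, sub_self, C_0]

theorem faulhaber_eval_natCast (d n : ℕ) :
    (faulhaber ℚ d).eval (n : ℚ) = ∑ k ∈ Finset.Ico 1 (n + 1), (k : ℚ) ^ d := by
  rw [sum_Ico_pow, faulhaber]
  simp only [eval_mul, eval_C, eval_finsetSum, eval_pow, eval_X, Algebra.algebraMap_self_apply,
    Finset.mul_sum]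
  refine Finset.sum_congr rfl fun i hi => ?_
  rw [show d - i + 1 = d + 1 - i by grind]
  field_simp

theorem faulhaber_rat_sub_comp (d : ℕ) :
    faulhaber ℚ d - (faulhaber ℚ d).comp (X - C 1) = X ^ d := by
  refine eq_of_infinite_eval_eq _ _ (Set.infinite_of_injective_forall_mem
    (f := fun n : ℕ => (n + 1 : ℚ)) (fun a b hab => by simpa using hab) fun n => ?_)
  have hn : ((n : ℚ) + 1) = ((n + 1 : ℕ) : ℚ) := by push_cast; rfl
  simp only [Set.mem_ofPred_eq, eval_sub, eval_comp, eval_X, eval_C, eval_pow, add_sub_cancel_right]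
  rw [hn, faulhaber_eval_natCast, faulhaber_eval_natCast, Finset.sum_Ico_succ_top (by omega)]
  ring

section faulhaber

variable (S : Type*) [CommRing S] [Algebra ℚ S]

theorem faulhaber_map (d : ℕ) : (faulhaber ℚ d).map (algebraMap ℚ S) = faulhaber S d := by
  simp only [faulhaber, Polynomial.map_mul, Polynomial.map_sum, Polynomial.map_pow, map_C, map_X,
    Algebra.algebraMap_self_apply]

theorem faulhaber_eval_zero (d : ℕ) : (faulhaber S d).eval 0 = 0 := by
  simp only [faulhaber, eval_mul, eval_finsetSum, eval_pow, eval_X, zero_pow (Nat.succ_ne_zero _),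
    mul_zero, Finset.sum_const_zero]

theorem faulhaber_sub_comp (d : ℕ) :
    faulhaber S d - (faulhaber S d).comp (X - C 1) = X ^ d := by
  simpa [Polynomial.map_comp, faulhaber_map] using
    congrArg (Polynomial.map (algebraMap ℚ S)) (faulhaber_rat_sub_comp d)

end faulhaber

section polySum

variable {S : Type*} [CommRing S] [Algebra ℚ S]

theorem polySum_eval_zero (p : S[X]) : (polySum p).eval 0 = 0 := by
  simp [polySum, eval_finsetSum, faulhaber_eval_zero]

theorem polySum_sub_comp (p : S[X]) : polySum p - (polySum p).comp (X - C 1) = p := by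
  conv_rhs => rw [p.as_sum_range_C_mul_X_pow]
  simp only [polySum, sum_comp, ← Finset.sum_sub_distrib, mul_comp, C_comp, ← mul_sub,
    faulhaber_sub_comp]

theorem eq_polySum_of_sub_comp_eq {Q p : S[X]} (hQ : Q - Q.comp (X - C 1) = p)
    (h0 : Q.eval 0 = 0) : Q = polySum p :=
  have := IsAddTorsionFree.of_module_rat S
  eq_of_sub_comp_X_sub_one_eq (by rw [hQ, polySum_sub_comp]) (by rw [h0, polySum_eval_zero])

end polySum

/-- Sum associativity for the dependent adder `𝔸¹`: `Sum(g)(Sum(f)(x)) = Sum(h)(x)` where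
`h := Sum(g)∘Sum(f) − Sum(g)∘(Sum(f)∘(X − 1))`. -/
theorem polySum_sum_assoc {S : Type*} [CommRing S] [Algebra ℚ S] (f g : Polynomial S)
    (x : S) :
    (polySum g).eval ((polySum f).eval x) =
      (polySum ((polySum g).comp (polySum f) -
        (polySum g).comp ((polySum f).comp (Polynomial.X - Polynomial.C 1)))).eval x := by
  have hcomp : (polySum g).comp (polySum f) = polySum ((polySum g).comp (polySum f) -
      (polySum g).comp ((polySum f).comp (X - C 1))) :=
    eq_polySum_of_sub_comp_eq (by rw [comp_assoc])
      (by rw [eval_comp, polySum_eval_zero, polySum_eval_zero])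
  rw [← hcomp, eval_comp]
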